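/- arXiv:0801.2844 — 2 statements merged into one kernel-verified Lean document; each statement's English description precedes it below -/
import Mathlib

section
/- The Brjuno function B : ℝ → [0,+∞] is lower semicontinuous. -/
open scoped ENNReal Topology

noncomputable def gaussIter (x : ℝ) : ℕ → ℝ
  | 0 => Int.fract x
  | n + 1 => Int.fract (gaussIter x n)⁻¹

noncomputable def pquot (x : ℝ) : ℕ → ℤ
  | 0 => ⌊x⌋
  | n + 1 => ⌊(gaussIter x n)⁻¹⌋

noncomputable def qden (x : ℝ) : ℕ → ℤ
  | 0 => 1
  | 1 => pquot x 1
  | n + 2 => pquot x (n + 2) * qden x (n + 1) + qden x n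

noncomputable def pnum (x : ℝ) : ℕ → ℤ
  | 0 => pquot x 0
  | 1 => pquot x 1 * pquot x 0 + 1
  | n + 2 => pquot x (n + 2) * pnum x (n + 1) + pnum x n

noncomputable def brjunoTerm (x : ℝ) (k : ℕ) : ℝ :=
  Real.log (pquot x (k + 1)) / (qden x k : ℝ)

open Classical in
noncomputable def brjuno (x : ℝ) : ℝ≥0∞ :=
  if Irrational x then ∑' k, ENNReal.ofReal (brjunoTerm x k) else ⊤

noncomputable def brjunoTailE (x : ℝ) (n : ℕ) : ℝ≥0∞ :=
  ∑' k, ENNReal.ofReal (brjunoTerm x (n + k))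

noncomputable def cfLen (x : ℝ) : ℕ := sInf {n | gaussIter x n = 0}

noncomputable def brjunoFinite (x : ℝ) : ℝ :=
  ∑ k ∈ Finset.range (cfLen x), Real.log (pquot x (k + 1)) / (qden x k : ℝ)

def brjunoSuper (t : ℝ) : Set ℝ := {x | ENNReal.ofReal t < brjuno x}

def IsCompOf (A : Set ℝ) (a b : ℝ) : Prop := ∃ x ∈ A, connectedComponentIn A x = Set.Ioo a b

def diamond (κ a b : ℝ) : Set ℂ :=
  {z : ℂ | a < z.re ∧ z.re < b ∧ |z.im| ≤ κ * min (z.re - a) (b - z.re)}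

noncomputable def CMset (κ M : ℝ) : Set ℂ :=
  (fun ξ : ℂ => Complex.exp (2 * Real.pi * Complex.I * ξ)) ''
    (⋃ (a : ℝ) (b : ℝ) (_ : IsCompOf (brjunoSuper M) a b), diamond κ a b)ᶜ ∪ {0}


open Filter Finset GenContFract

/-
At an irrational point the Gauss iterates are continuous, so the partial quotients `a₁, …, aₙ` and
the denominators `q₀, …, qₙ` are locally constant; hence so is every partial sum of `B`, and `B`,
their supremum, is lower semicontinuous there. A rational `x = [a₀; …, aₘ]` is approached by
irrationals `z = [a₀; …, aₘ, N, …]` or `z = [a₀; …, aₘ - 1, 1, N, …]` with `N → ∞` as `z → x`;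
either way `z` has a term `log N / qₘ(x)`, so `B(z) → ∞ = B(x)`.
-/

theorem Int.eventually_floor_eq {α : Type*} [Ring α] [LinearOrder α] [IsStrictOrderedRing α]
    [FloorRing α] [TopologicalSpace α] [OrderTopology α] {y : α} (hy : Int.fract y ≠ 0) :
    ∀ᶠ u in 𝓝 y, ⌊u⌋ = ⌊y⌋ := by
  have hlt : (⌊y⌋ : α) < y :=
    (Int.floor_le y).lt_of_ne (Int.fract_pos.1 ((Int.fract_nonneg y).lt_of_ne' hy)).symm
  filter_upwards [Ioo_mem_nhds hlt (Int.lt_floor_add_one y)] with u hu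
  exact Int.floor_eq_iff.2 ⟨hu.1.le, hu.2⟩

/-- The complete quotients `x = [a₀; a₁, …, aₙ₋₁, completeQuot x n]`. -/
noncomputable def completeQuot (x : ℝ) : ℕ → ℝ
  | 0 => x
  | n + 1 => (gaussIter x n)⁻¹

theorem gaussIter_eq_fract (x : ℝ) (n : ℕ) : gaussIter x n = Int.fract (completeQuot x n) := by
  cases n <;> rfl

theorem pquot_eq_floor (x : ℝ) (n : ℕ) : pquot x n = ⌊completeQuot x n⌋ := by
  cases n <;> rfl

theorem completeQuot_succ (x : ℝ) (n : ℕ) :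
    completeQuot x (n + 1) = (Int.fract (completeQuot x n))⁻¹ := by
  rw [← gaussIter_eq_fract]; rfl

theorem Irrational.completeQuot {x : ℝ} (hx : Irrational x) (n : ℕ) :
    Irrational (completeQuot x n) := by
  induction n with
  | zero => exact hx
  | succ n ih => rw [completeQuot_succ, ← Int.self_sub_floor]; exact (ih.sub_intCast _).inv

theorem Irrational.gaussIter_ne_zero {x : ℝ} (hx : Irrational x) (n : ℕ) : gaussIter x n ≠ 0 := by
  rw [gaussIter_eq_fract, ← Int.self_sub_floor]
  exact (hx.completeQuot n).sub_intCast _ |>.ne_zero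

theorem one_le_pquot_succ {x : ℝ} {n : ℕ} (h : gaussIter x n ≠ 0) : 1 ≤ pquot x (n + 1) := by
  rw [gaussIter_eq_fract] at h
  have hpos : 0 < Int.fract (completeQuot x n) := (Int.fract_nonneg _).lt_of_ne' h
  rw [pquot_eq_floor, completeQuot_succ, Int.le_floor, Int.cast_one]
  exact one_le_inv₀ hpos |>.2 (Int.fract_lt_one _).le

theorem one_le_qden {x : ℝ} : ∀ n, (∀ j < n, gaussIter x j ≠ 0) → 1 ≤ qden x n
  | 0, _ => le_rfl
  | 1, h => one_le_pquot_succ (h 0 one_pos)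
  | n + 2, h => by
    have h₁ := one_le_qden (n + 1) fun j hj => h j (by omega)
    have h₀ := one_le_qden n fun j hj => h j (by omega)
    have ha := one_le_pquot_succ (h (n + 1) (by omega))
    simp only [qden]
    nlinarith

theorem qden_congr {x z : ℝ} : ∀ n, (∀ j ≤ n, pquot z j = pquot x j) → qden z n = qden x n
  | 0, _ => rfl
  | 1, h => h 1 le_rfl
  | n + 2, h => by
    simp only [qden]
    rw [h (n + 2) le_rfl, qden_congr (n + 1) fun j hj => h j (by omega),
      qden_congr n fun j hj => h j (by omega)]

/-- `[a₀; …, aₘ₋₁, aₘ - 1, 1] = [a₀; …, aₘ₋₁, aₘ]` at the level of denominators. -/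
theorem qden_succ_eq_of_pquot_eq_sub_one {x z : ℝ} {m : ℕ} (h : ∀ j < m, pquot z j = pquot x j)
    (hm : pquot z m = pquot x m - 1) (hm' : pquot z (m + 1) = 1) : qden z (m + 1) = qden x m := by
  match m with
  | 0 => exact hm'
  | 1 =>
    simp only [qden] at hm' ⊢
    rw [hm, hm']; ring
  | n + 2 =>
    change pquot z (n + 3) * (pquot z (n + 2) * qden z (n + 1) + qden z n) + qden z (n + 1) =
      pquot x (n + 2) * qden x (n + 1) + qden x n
    rw [hm', hm, qden_congr (n + 1) fun j hj => h j (by omega),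
      qden_congr n fun j hj => h j (by omega)]
    ring

theorem continuousAt_completeQuot {x : ℝ} : ∀ n, (∀ j < n, gaussIter x j ≠ 0) →
    ContinuousAt (completeQuot · n) x ∧ ∀ᶠ z in 𝓝 x, ∀ j < n, pquot z j = pquot x j
  | 0, _ => ⟨continuousAt_id, by simp⟩
  | n + 1, h => by
    obtain ⟨hc, hev⟩ := continuousAt_completeQuot n fun j hj => h j (by omega)
    have hfr : Int.fract (completeQuot x n) ≠ 0 := gaussIter_eq_fract x n ▸ h n (by omega)
    have hfr_pos : 0 < Int.fract (completeQuot x n) := (Int.fract_nonneg _).lt_of_ne' hfr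
    refine ⟨?_, ?_⟩
    · simp only [completeQuot_succ]
      exact ((continuousAt_fract (Int.fract_pos.1 hfr_pos)).comp (f := (completeQuot · n)) hc).inv₀
        hfr
    · filter_upwards [hev, hc.eventually (Int.eventually_floor_eq hfr)] with z hz hfl j hj
      rcases Nat.lt_succ_iff_lt_or_eq.1 hj with hj | rfl
      · exact hz j hj
      · rw [pquot_eq_floor, pquot_eq_floor]
        exact hfl

theorem stream_eq_some_of_gaussIter_ne_zero {x : ℝ} :
    ∀ n, (∀ j < n, gaussIter x j ≠ 0) →
      IntFractPair.stream x n = some (.of (completeQuot x n))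
  | 0, _ => rfl
  | n + 1, h => by
    rw [IntFractPair.stream_succ_of_some
      (stream_eq_some_of_gaussIter_ne_zero n fun j hj => h j (by omega))
      (by rw [IntFractPair.of, ← gaussIter_eq_fract]; exact h n (by omega)),
      completeQuot_succ]
    rfl

theorem exists_gaussIter_eq_zero {x : ℝ} (hx : ¬Irrational x) : ∃ n, gaussIter x n = 0 := by
  obtain ⟨q, rfl⟩ : ∃ q : ℚ, (q : ℝ) = x := by simpa [Irrational] using hx
  obtain ⟨n, hn⟩ := IntFractPair.exists_nth_stream_eq_none_of_rat q
  by_contra! h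
  have := IntFractPair.coe_stream_nth_rat_eq (v := (q : ℝ)) rfl n
  rw [hn, stream_eq_some_of_gaussIter_ne_zero n fun j _ => h j] at this
  simp at this

theorem gaussIter_cfLen {x : ℝ} (hx : ¬Irrational x) : gaussIter x (cfLen x) = 0 :=
  Nat.sInf_mem (exists_gaussIter_eq_zero hx)

theorem gaussIter_ne_zero_of_lt_cfLen {x : ℝ} {j : ℕ} (hj : j < cfLen x) : gaussIter x j ≠ 0 :=
  Nat.notMem_of_lt_sInf hj

theorem pquot_eq_and_le_pquot_succ {z : ℝ} {n N : ℕ} {a : ℤ} (h₁ : a < completeQuot z n)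
    (h₂ : completeQuot z n < a + 1 / (N + 1)) : pquot z n = a ∧ (N : ℤ) ≤ pquot z (n + 1) := by
  have hN : 1 / ((N : ℝ) + 1) ≤ 1 := by rw [div_le_one₀ (by positivity)]; simp
  have hfl : ⌊completeQuot z n⌋ = a := Int.floor_eq_iff.2 ⟨h₁.le, by linarith⟩
  refine ⟨pquot_eq_floor z n ▸ hfl, ?_⟩
  rw [pquot_eq_floor, completeQuot_succ, ← Int.self_sub_floor, hfl, Int.le_floor, Int.cast_natCast]
  have hpos : 0 < completeQuot z n - a := sub_pos.2 h₁
  have : ((N : ℝ) + 1) ≤ (completeQuot z n - a)⁻¹ := by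
    rw [le_inv_comm₀ (by positivity) hpos, ← one_div]
    linarith
  linarith

theorem pquot_eq_sub_one_and_le_pquot_add_two {z : ℝ} {n N : ℕ} {a : ℤ}
    (h₁ : a - 1 / (N + 2) < completeQuot z n) (h₂ : completeQuot z n < a) :
    pquot z n = a - 1 ∧ pquot z (n + 1) = 1 ∧ (N : ℤ) ≤ pquot z (n + 2) := by
  have hN : 1 / ((N : ℝ) + 2) ≤ 1 / 2 := by gcongr; linarith [N.cast_nonneg (α := ℝ)]
  have hfl : ⌊completeQuot z n⌋ = a - 1 := Int.floor_eq_iff.2 ⟨by push_cast; linarith, by simpa⟩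
  have hg : Int.fract (completeQuot z n) = completeQuot z n - (a - 1) := by
    rw [← Int.self_sub_floor, hfl]; push_cast; ring
  set g := Int.fract (completeQuot z n)
  have hg_pos : 0 < g := by linarith
  have hcq : completeQuot z (n + 1) = g⁻¹ := completeQuot_succ z n
  -- `g` lies within `1 / (N + 2)` below `1`, so `g⁻¹` lies within `1 / (N + 1)` above `1`.
  obtain ⟨h1, h2⟩ := pquot_eq_and_le_pquot_succ (z := z) (n := n + 1) (N := N) (a := 1)
    (by rw [hcq, Int.cast_one]; exact one_lt_inv₀ hg_pos |>.2 (by linarith))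
    (by
      rw [hcq, Int.cast_one, inv_lt_comm₀ hg_pos (by positivity)]
      have : (1 + 1 / ((N : ℝ) + 1))⁻¹ = 1 - 1 / (N + 2) := by field_simp; ring
      linarith)
  exact ⟨pquot_eq_floor z n ▸ hfl, h1, h2⟩

theorem eventually_exists_qden_eq_and_le_pquot {x : ℝ} (hx : ¬Irrational x) (N : ℕ) :
    ∀ᶠ z in 𝓝 x, Irrational z →
      ∃ k, qden z k = qden x (cfLen x) ∧ (N : ℤ) ≤ pquot z (k + 1) := by
  set m := cfLen x
  obtain ⟨hc, hev⟩ := continuousAt_completeQuot m fun j => gaussIter_ne_zero_of_lt_cfLen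
  have hxa : completeQuot x m = pquot x m := by
    have := gaussIter_cfLen hx
    rw [gaussIter_eq_fract, ← Int.self_sub_floor, ← pquot_eq_floor] at this
    linarith
  have hδ : 0 < 1 / ((N : ℝ) + 2) := by positivity
  have hδ' : 1 / ((N : ℝ) + 2) ≤ 1 / (N + 1) := by gcongr; linarith
  have hnhds : Set.Ioo (pquot x m - 1 / ((N : ℝ) + 2)) (pquot x m + 1 / ((N : ℝ) + 2)) ∈
      𝓝 (completeQuot x m) := hxa ▸ Ioo_mem_nhds (sub_lt_self _ hδ) (lt_add_of_pos_right _ hδ)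
  filter_upwards [hev, hc hnhds] with z hpq hw hz
  rcases lt_or_gt_of_ne ((hz.completeQuot m).ne_int (pquot x m)) with hlt | hgt
  · obtain ⟨h₀, h₁, h₂⟩ := pquot_eq_sub_one_and_le_pquot_add_two hw.1 hlt
    exact ⟨m + 1, qden_succ_eq_of_pquot_eq_sub_one hpq h₀ h₁, h₂⟩
  · obtain ⟨h₀, h₁⟩ := pquot_eq_and_le_pquot_succ hgt (hw.2.trans_le (by gcongr))
    refine ⟨m, qden_congr m fun j hj => ?_, h₁⟩
    rcases hj.lt_or_eq with hj | rfl
    exacts [hpq j hj, h₀]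

theorem ofReal_brjunoTerm_le_brjuno (z : ℝ) (k : ℕ) :
    ENNReal.ofReal (brjunoTerm z k) ≤ brjuno z := by
  by_cases hz : Irrational z
  · rw [brjuno, if_pos hz]
    exact ENNReal.le_tsum k
  · rw [brjuno, if_neg hz]
    exact le_top

theorem sum_ofReal_brjunoTerm_le_brjuno (z : ℝ) (n : ℕ) :
    ∑ k ∈ range n, ENNReal.ofReal (brjunoTerm z k) ≤ brjuno z := by
  by_cases hz : Irrational z
  · rw [brjuno, if_pos hz]
    exact ENNReal.sum_le_tsum _
  · rw [brjuno, if_neg hz]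
    exact le_top

theorem eventually_brjunoTerm_eq {x : ℝ} (hx : Irrational x) (n : ℕ) :
    ∀ᶠ z in 𝓝 x, ∀ k < n, brjunoTerm z k = brjunoTerm x k := by
  filter_upwards [(continuousAt_completeQuot (n + 1) fun j _ => hx.gaussIter_ne_zero j).2]
    with z hz k hk
  rw [brjunoTerm, brjunoTerm, hz (k + 1) (by omega), qden_congr k fun j hj => hz j (by omega)]

theorem lowerSemicontinuousAt_brjuno_of_irrational {x : ℝ} (hx : Irrational x) :
    LowerSemicontinuousAt brjuno x := by
  intro y hy
  rw [gt_iff_lt, brjuno, if_pos hx, ENNReal.tsum_eq_iSup_nat, lt_iSup_iff] at hy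
  obtain ⟨n, hn⟩ := hy
  filter_upwards [eventually_brjunoTerm_eq hx n] with z hz
  calc y < ∑ k ∈ range n, ENNReal.ofReal (brjunoTerm x k) := hn
    _ = ∑ k ∈ range n, ENNReal.ofReal (brjunoTerm z k) :=
      sum_congr rfl fun k hk => by rw [hz k (mem_range.1 hk)]
    _ ≤ brjuno z := sum_ofReal_brjunoTerm_le_brjuno z n

theorem tendsto_brjuno_of_not_irrational {x : ℝ} (hx : ¬Irrational x) :
    Tendsto brjuno (𝓝 x) (𝓝 ∞) := by
  set Q : ℝ := (qden x (cfLen x) : ℝ)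
  have hQ : 0 < Q := Int.cast_pos.2 (one_le_qden (cfLen x) fun j => gaussIter_ne_zero_of_lt_cfLen)
  refine ENNReal.tendsto_nhds_top fun n => ?_
  have hlog : Tendsto (fun N : ℕ => Real.log N / Q) atTop atTop :=
    (Real.tendsto_log_atTop.comp tendsto_natCast_atTop_atTop).atTop_div_const hQ
  obtain ⟨N, hN, hNn⟩ := ((eventually_gt_atTop 0).and (hlog.eventually_gt_atTop (n : ℝ))).exists
  filter_upwards [eventually_exists_qden_eq_and_le_pquot hx N] with z hz
  by_cases hzI : Irrational z
  · obtain ⟨k, hqk, hNk⟩ := hz hzI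
    calc (n : ℝ≥0∞) = ENNReal.ofReal n := (ENNReal.ofReal_natCast n).symm
      _ < ENNReal.ofReal (Real.log N / Q) :=
        (ENNReal.ofReal_lt_ofReal_iff_of_nonneg n.cast_nonneg).2 hNn
      _ ≤ ENNReal.ofReal (brjunoTerm z k) := by
        rw [brjunoTerm, hqk]
        gcongr
        exact_mod_cast hNk
      _ ≤ brjuno z := ofReal_brjunoTerm_le_brjuno z k
  · rw [brjuno, if_neg hzI]
    exact ENNReal.natCast_lt_top n

/-- the Brjuno function is lower semicontinuous. -/
theorem statement3 : LowerSemicontinuous brjuno := by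
  intro x
  by_cases hx : Irrational x
  · exact lowerSemicontinuousAt_brjuno_of_irrational hx
  · exact fun y hy => (tendsto_brjuno_of_not_irrational hx).eventually_const_lt (hy.trans_le le_top)
end

section
/- For every ε > 0 there exists M > 0 such that the Lebesgue measure of the set { x ∈ [0,1] : B(x) > M } is less than ε. In particular, B(x) < +∞ for Lebesgue-almost every x ∈ ℝ. -/
open scoped ENNReal Topology

/-!
Write `G y = fract (1 / y)` for the Gauss map, so that `a_{k+1} = ⌊1 / G^k x⌋ ≤ 1 / G^k x`.
Since `q_{k+2} ≥ 2 q_k`, the denominators grow like `√2 ^ k`, and the `k`-th term of `B(x)` is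
at most `√2 ^ (1 - k) · (-log G^k x)`. The Gauss measure `dy / (1 + y)` is `G`-invariant and
comparable to Lebesgue measure on `[0, 1)`, so `∫₀¹ -log (G^k x) dx ≤ 2 ∫₀¹ -log y dy` uniformly
in `k`. Summing the geometric series, `B` is integrable on `[0, 1)`: Markov's inequality gives
the small superlevel sets, and `B` is finite almost everywhere on `[0, 1)`, hence on `ℝ` by
`1`-periodicity.
-/

open MeasureTheory Set Filter

lemma sqrt_two_pow_le_of_two_mul_le {q : ℕ → ℝ} (h0 : 1 ≤ q 0) (h1 : 1 ≤ q 1)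
    (h : ∀ n, 2 * q n ≤ q (n + 2)) (n : ℕ) : √2 ^ n ≤ √2 * q n := by
  have hs : 1 ≤ √2 := Real.one_le_sqrt.2 one_le_two
  induction n using Nat.twoStepInduction with
  | zero => simpa using one_le_mul_of_one_le_of_one_le hs h0
  | one => simpa using h1
  | more n ih _ =>
    calc √2 ^ (n + 2) = 2 * √2 ^ n := by rw [pow_add, Real.sq_sqrt zero_le_two, mul_comm]
      _ ≤ 2 * (√2 * q n) := by gcongr
      _ ≤ √2 * q (n + 2) := by nlinarith [h n]

lemma inv_le_of_sqrt_two_pow_le {q : ℝ} {n : ℕ} (h : √2 ^ n ≤ √2 * q) :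
    q⁻¹ ≤ √2 * (√2)⁻¹ ^ n := by
  have hq : 0 < q := pos_of_mul_pos_right ((pow_pos (by positivity) n).trans_le h) (by positivity)
  rw [inv_pow, ← div_eq_mul_inv, inv_le_comm₀ hq (by positivity), inv_div,
    div_le_iff₀' (by positivity)]
  exact h

lemma ae_irrational : ∀ᵐ x : ℝ, Irrational x := (countable_range _).ae_notMem volume

lemma exists_pos_measure_lt_of_lintegral_ne_top {α : Type*} [MeasurableSpace α] {μ : Measure α}
    {f : α → ℝ≥0∞} (hf : AEMeasurable f μ) (hfi : ∫⁻ x, f x ∂μ ≠ ⊤) {ε : ℝ≥0∞} (hε : ε ≠ 0) :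
    ∃ M : ℝ, 0 < M ∧ μ {x | ENNReal.ofReal M < f x} < ε := by
  have hlim : Tendsto (fun M : ℝ => (∫⁻ x, f x ∂μ) / ENNReal.ofReal M) atTop (𝓝 0) := by
    simpa using ENNReal.Tendsto.const_div ENNReal.tendsto_ofReal_atTop (Or.inr hfi)
  obtain ⟨M, hM, hlt⟩ :=
    ((eventually_gt_atTop 0).and (hlim.eventually (gt_mem_nhds hε.bot_lt))).exists
  refine ⟨M, hM, lt_of_le_of_lt ?_ hlt⟩
  calc μ {x | ENNReal.ofReal M < f x} ≤ μ {x | ENNReal.ofReal M ≤ f x} :=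
        measure_mono <| ofPred_subset_ofPred.2 fun _ => le_of_lt
    _ ≤ _ := meas_ge_le_lintegral_div hf (ENNReal.ofReal_pos.2 hM).ne' ENNReal.ofReal_ne_top

lemma ae_of_ae_restrict_Ico_of_periodic {p : ℝ → Prop} (hp : ∀ x (n : ℤ), p (x + n) ↔ p x)
    (h : ∀ᵐ x ∂volume.restrict (Ico 0 1), p x) : ∀ᵐ x, p x := by
  rw [← Measure.restrict_univ (μ := volume), ← iUnion_Ico_intCast, ae_restrict_iUnion_iff]
  intro n
  have hshift : MeasurePreserving (· + ((-n : ℤ) : ℝ)) (volume.restrict (Ico n (n + 1)))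
      (volume.restrict (Ico 0 1)) := by
    convert (measurePreserving_add_right volume ((-n : ℤ) : ℝ)).restrict_preimage
      measurableSet_Ico using 2
    ext x
    simp only [mem_Ico, mem_preimage, Int.cast_neg]
    constructor <;> rintro ⟨h₁, h₂⟩ <;> constructor <;> linarith
  filter_upwards [hshift.quasiMeasurePreserving.ae h] with x hx
  exact (hp x (-n)).1 hx

lemma Irrational.fract_mem_Ioo {y : ℝ} (hy : Irrational y) : Int.fract y ∈ Ioo 0 1 :=
  ⟨(Int.fract_nonneg y).lt_of_ne'
    (by simpa [← Int.self_sub_floor] using (hy.sub_intCast ⌊y⌋).ne_zero), Int.fract_lt_one y⟩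

section ContinuedFraction

variable {x : ℝ}

lemma irrational_gaussIter (hx : Irrational x) (k : ℕ) : Irrational (gaussIter x k) := by
  induction k with
  | zero => simpa [gaussIter, ← Int.self_sub_floor] using hx.sub_intCast ⌊x⌋
  | succ k ih =>
    simpa [gaussIter, ← Int.self_sub_floor] using ih.inv.sub_intCast ⌊(gaussIter x k)⁻¹⌋

lemma gaussIter_mem_Ioo (hx : Irrational x) (k : ℕ) : gaussIter x k ∈ Ioo 0 1 := by
  cases k with
  | zero => exact hx.fract_mem_Ioo
  | succ k => exact (irrational_gaussIter hx k).inv.fract_mem_Ioo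

lemma one_le_pquot_succ_s10 (hx : Irrational x) (k : ℕ) : 1 ≤ pquot x (k + 1) := by
  have h := gaussIter_mem_Ioo hx k
  exact Int.le_floor.2 (by exact_mod_cast (one_lt_inv₀ h.1).2 h.2 |>.le)

lemma pquot_succ_le_inv_gaussIter (k : ℕ) : (pquot x (k + 1) : ℝ) ≤ (gaussIter x k)⁻¹ :=
  Int.floor_le _

lemma one_le_qden_s10 (hx : Irrational x) (k : ℕ) : 1 ≤ qden x k := by
  induction k using Nat.twoStepInduction with
  | zero => rfl
  | one => exact one_le_pquot_succ_s10 hx 0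
  | more k ih₀ ih₁ =>
    show 1 ≤ pquot x (k + 2) * qden x (k + 1) + qden x k
    nlinarith [one_le_pquot_succ_s10 hx (k + 1)]

lemma qden_le_qden_succ (hx : Irrational x) (k : ℕ) : qden x k ≤ qden x (k + 1) := by
  cases k with
  | zero => exact one_le_qden_s10 hx 1
  | succ k =>
    show qden x (k + 1) ≤ pquot x (k + 2) * qden x (k + 1) + qden x k
    nlinarith [one_le_pquot_succ_s10 hx (k + 1), one_le_qden_s10 hx k, one_le_qden_s10 hx (k + 1)]

lemma two_mul_qden_le (hx : Irrational x) (k : ℕ) : 2 * qden x k ≤ qden x (k + 2) := by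
  show 2 * qden x k ≤ pquot x (k + 2) * qden x (k + 1) + qden x k
  nlinarith [one_le_pquot_succ_s10 hx (k + 1), one_le_qden_s10 hx k, qden_le_qden_succ hx k]

lemma inv_qden_le (hx : Irrational x) (k : ℕ) : (qden x k : ℝ)⁻¹ ≤ √2 * (√2)⁻¹ ^ k :=
  inv_le_of_sqrt_two_pow_le <| sqrt_two_pow_le_of_two_mul_le (q := fun n => (qden x n : ℝ))
    (by simp [qden]) (by exact_mod_cast one_le_qden_s10 hx 1)
    (fun n => by exact_mod_cast two_mul_qden_le hx n) k

lemma brjunoTerm_le (hx : Irrational x) (k : ℕ) :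
    brjunoTerm x k ≤ (qden x k : ℝ)⁻¹ * -Real.log (gaussIter x k) := by
  have ha : (0 : ℝ) < pquot x (k + 1) := by exact_mod_cast one_le_pquot_succ_s10 hx k
  have hq : (0 : ℝ) ≤ (qden x k : ℝ)⁻¹ :=
    inv_nonneg.2 (by exact_mod_cast zero_le_one.trans (one_le_qden_s10 hx k))
  rw [brjunoTerm, div_eq_inv_mul, ← Real.log_inv]
  exact mul_le_mul_of_nonneg_left (Real.log_le_log ha (pquot_succ_le_inv_gaussIter k)) hq

end ContinuedFraction

lemma gaussIter_add_intCast (x : ℝ) (n : ℤ) (k : ℕ) : gaussIter (x + n) k = gaussIter x k := by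
  induction k with
  | zero => exact Int.fract_add_intCast x n
  | succ k ih => rw [gaussIter, gaussIter, ih]

lemma pquot_succ_add_intCast (x : ℝ) (n : ℤ) (k : ℕ) :
    pquot (x + n) (k + 1) = pquot x (k + 1) := by
  rw [pquot, pquot, gaussIter_add_intCast]

lemma qden_add_intCast (x : ℝ) (n : ℤ) (k : ℕ) : qden (x + n) k = qden x k := by
  induction k using Nat.twoStepInduction with
  | zero => rfl
  | one => exact pquot_succ_add_intCast x n 0
  | more k ih₀ ih₁ => rw [qden, qden, ih₀, ih₁, pquot_succ_add_intCast]

lemma brjuno_add_intCast (x : ℝ) (n : ℤ) : brjuno (x + n) = brjuno x := by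
  simp only [brjuno, brjunoTerm, pquot_succ_add_intCast, qden_add_intCast]
  rw [irrational_add_intCast_iff]

lemma measurable_gaussIter (k : ℕ) : Measurable fun x => gaussIter x k := by
  induction k with
  | zero => exact measurable_fract
  | succ k ih => exact measurable_fract.comp ih.inv

lemma measurable_pquot_succ (k : ℕ) : Measurable fun x => (pquot x (k + 1) : ℝ) :=
  measurable_from_top.comp (Int.measurable_floor.comp (measurable_gaussIter k).inv)

lemma measurable_qden (k : ℕ) : Measurable fun x => (qden x k : ℝ) := by
  induction k using Nat.twoStepInduction with
  | zero => simp [qden]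
  | one => exact measurable_pquot_succ 0
  | more k ih₀ ih₁ =>
    simp only [qden, Int.cast_add, Int.cast_mul]
    exact ((measurable_pquot_succ (k + 1)).mul ih₁).add ih₀

lemma measurable_brjunoTerm (k : ℕ) : Measurable fun x => brjunoTerm x k :=
  (Real.measurable_log.comp (measurable_pquot_succ k)).div (measurable_qden k)

lemma measurable_brjuno : Measurable brjuno :=
  .ite (countable_range _).measurableSet.compl
    (.tsum fun k => (measurable_brjunoTerm k).ennreal_ofReal) measurable_const

/-- `2 log 2` times the density of the Gauss measure `dy / ((1 + y) log 2)`: the factor makes it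
at least `1` on `[0, 1)`. -/
noncomputable def gaussDensity (y : ℝ) : ℝ≥0∞ := ENNReal.ofReal (2 / (1 + y))

noncomputable def gaussMeasure : Measure ℝ := (volume.restrict (Ico 0 1)).withDensity gaussDensity

noncomputable def gaussMap (y : ℝ) : ℝ := Int.fract y⁻¹

/-- The inverse of `gaussMap` on `(1 / (m + 2), 1 / (m + 1)]`. -/
noncomputable def gaussBranch (m : ℕ) (u : ℝ) : ℝ := (m + 1 + u)⁻¹

@[fun_prop]

lemma measurable_gaussDensity : Measurable gaussDensity :=
  (measurable_const.div (measurable_const.add measurable_id)).ennreal_ofReal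

lemma measurable_gaussMap : Measurable gaussMap := measurable_fract.comp measurable_inv

lemma gaussMeasure_apply {A : Set ℝ} (hA : MeasurableSet A) :
    gaussMeasure A = ∫⁻ y in A ∩ Ico 0 1, gaussDensity y := by
  rw [gaussMeasure, withDensity_apply _ hA, Measure.restrict_restrict hA]

lemma hasSum_two_div_mul {u : ℝ} (hu : 0 ≤ u) :
    HasSum (fun m : ℕ => 2 / ((m + 1 + u) * (m + 2 + u))) (2 / (1 + u)) := by
  set f : ℕ → ℝ := fun m => 2 / (m + 1 + u)
  have hterm (m : ℕ) : 2 / ((m + 1 + u) * (m + 2 + u)) = f m - f (m + 1) := by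
    simp only [f]; push_cast; field_simp; ring
  have hf : Tendsto f atTop (𝓝 0) :=
    tendsto_const_nhds.div_atTop (tendsto_atTop_add_const_right _ _
      (tendsto_atTop_add_const_right _ _ tendsto_natCast_atTop_atTop))
  rw [hasSum_iff_tendsto_nat_of_nonneg (fun m => by positivity)]
  simp only [hterm, Finset.sum_range_sub']
  simpa [f] using tendsto_const_nhds.sub hf

lemma hasDerivAt_gaussBranch (m : ℕ) {u : ℝ} (hu : 0 ≤ u) :
    HasDerivAt (gaussBranch m) (-((m + 1 + u) ^ 2)⁻¹) u := by
  have h := ((hasDerivAt_id u).const_add ((m : ℝ) + 1)).inv (by positivity)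
  simp only [id, neg_div, one_div] at h
  exact h

lemma tsum_gaussDensity_gaussBranch {u : ℝ} (hu : 0 ≤ u) :
    ∑' m : ℕ, ENNReal.ofReal |-((m + 1 + u) ^ 2)⁻¹| * gaussDensity (gaussBranch m u)
      = gaussDensity u := by
  have hterm (m : ℕ) : ENNReal.ofReal |-((m + 1 + u) ^ 2)⁻¹| * gaussDensity (gaussBranch m u)
      = ENNReal.ofReal (2 / ((m + 1 + u) * (m + 2 + u))) := by
    rw [gaussDensity, gaussBranch, ← ENNReal.ofReal_mul (abs_nonneg _), abs_neg,
      abs_of_pos (by positivity)]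
    congr 1
    field_simp
    ring
  simp only [hterm]
  rw [← ENNReal.ofReal_tsum_of_nonneg (fun m => by positivity) (hasSum_two_div_mul hu).summable,
    (hasSum_two_div_mul hu).tsum_eq, gaussDensity]

lemma gaussBranch_gaussMap {y : ℝ} (hy : y ∈ Ioc 0 1) :
    gaussBranch (⌊y⁻¹⌋ - 1).toNat (gaussMap y) = y := by
  have h1 : 1 ≤ ⌊y⁻¹⌋ := Int.le_floor.2 (by exact_mod_cast (one_le_inv₀ hy.1).2 hy.2)
  have hm : (((⌊y⁻¹⌋ - 1).toNat : ℕ) : ℝ) = ⌊y⁻¹⌋ - 1 := by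
    exact_mod_cast Int.toNat_of_nonneg (by omega)
  rw [gaussBranch, gaussMap, hm, ← Int.self_sub_floor]
  simp

lemma map_gaussMap_le : gaussMeasure.map gaussMap ≤ gaussMeasure := by
  refine Measure.le_iff.2 fun A hA => ?_
  set S := A ∩ Ico 0 1
  have hS : MeasurableSet S := hA.inter measurableSet_Ico
  have hcover : gaussMap ⁻¹' A ∩ Ioc 0 1 ⊆ ⋃ m : ℕ, gaussBranch m '' S := fun y ⟨hyA, hy⟩ =>
    mem_iUnion.2 ⟨_, gaussMap y, ⟨hyA, Int.fract_nonneg _, Int.fract_lt_one _⟩,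
      gaussBranch_gaussMap hy⟩
  have hderiv (m : ℕ) : ∀ u ∈ S, HasDerivWithinAt (gaussBranch m) (-((m + 1 + u) ^ 2)⁻¹) S u :=
    fun u hu => (hasDerivAt_gaussBranch m hu.2.1).hasDerivWithinAt
  have hinj (m : ℕ) : InjOn (gaussBranch m) S := fun a _ b _ h => by
    simpa [gaussBranch] using inv_injective h
  have hmeas (m : ℕ) : Measurable fun u : ℝ =>
      ENNReal.ofReal |-((m + 1 + u) ^ 2)⁻¹| * gaussDensity (gaussBranch m u) := by
    unfold gaussBranch; fun_prop
  rw [Measure.map_apply measurable_gaussMap hA, gaussMeasure_apply (measurable_gaussMap hA),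
    gaussMeasure_apply hA, setLIntegral_congr ((EventuallyEq.refl _ _).inter Ico_ae_eq_Ioc)]
  calc ∫⁻ y in gaussMap ⁻¹' A ∩ Ioc 0 1, gaussDensity y
      ≤ ∫⁻ y in ⋃ m : ℕ, gaussBranch m '' S, gaussDensity y := lintegral_mono_set hcover
    _ ≤ ∑' m : ℕ, ∫⁻ y in gaussBranch m '' S, gaussDensity y := lintegral_iUnion_le _ _
    _ = ∑' m : ℕ, ∫⁻ u in S,
          ENNReal.ofReal |-((m + 1 + u) ^ 2)⁻¹| * gaussDensity (gaussBranch m u) := by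
      simp only [lintegral_image_eq_lintegral_abs_deriv_mul hS (hderiv _) (hinj _)]
    _ = ∫⁻ u in S, gaussDensity u := by
      rw [← lintegral_tsum fun m => (hmeas m).aemeasurable]
      exact setLIntegral_congr_fun hS fun u hu => tsum_gaussDensity_gaussBranch hu.2.1

lemma map_gaussIter_le (k : ℕ) :
    (volume.restrict (Ico 0 1)).map (fun x => gaussIter x k) ≤ gaussMeasure := by
  induction k with
  | zero =>
    have hfract : (fun x => gaussIter x 0) =ᵐ[volume.restrict (Ico 0 1)] id := by
      filter_upwards [ae_restrict_mem measurableSet_Ico] with x hx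
      exact Int.fract_eq_self.2 hx
    rw [Measure.map_congr hfract, Measure.map_id, gaussMeasure]
    conv_lhs => rw [← withDensity_one (μ := volume.restrict (Ico 0 1))]
    refine withDensity_mono ?_
    filter_upwards [ae_restrict_mem measurableSet_Ico] with y hy
    exact ENNReal.one_le_ofReal.2 ((one_le_div (by linarith [hy.1])).2 (by linarith [hy.2]))
  | succ k ih =>
    rw [show (fun x => gaussIter x (k + 1)) = gaussMap ∘ fun x => gaussIter x k from rfl,
      ← Measure.map_map measurable_gaussMap (measurable_gaussIter k)]
    exact (Measure.map_mono ih measurable_gaussMap).trans map_gaussMap_le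

lemma lintegral_neg_log_gaussMeasure_lt_top :
    ∫⁻ y, ENNReal.ofReal (-Real.log y) ∂gaussMeasure < ⊤ := by
  have hlog : IntegrableOn (fun y => -Real.log y) (Ico 0 1) :=
    (intervalIntegral.intervalIntegrable_log' (a := 0) (b := 1)).1.neg.congr_set_ae Ico_ae_eq_Ioc
  have hmeas : Measurable fun y : ℝ => ENNReal.ofReal (-Real.log y) :=
    Real.measurable_log.neg.ennreal_ofReal
  rw [gaussMeasure, lintegral_withDensity_eq_lintegral_mul _ measurable_gaussDensity hmeas]
  calc ∫⁻ y in Ico 0 1, gaussDensity y * ENNReal.ofReal (-Real.log y)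
      ≤ ∫⁻ y in Ico 0 1, 2 * ENNReal.ofReal (-Real.log y) := by
        refine setLIntegral_mono' measurableSet_Ico fun y hy => mul_le_mul_left ?_ _
        rw [gaussDensity, ← ENNReal.ofReal_ofNat 2]
        exact ENNReal.ofReal_le_ofReal (div_le_self zero_le_two (by linarith [hy.1]))
    _ < ⊤ := by
      rw [lintegral_const_mul _ hmeas]
      exact ENNReal.mul_lt_top (by norm_num) hlog.lintegral_lt_top

lemma lintegral_brjunoTerm_le (k : ℕ) :
    ∫⁻ x in Ico 0 1, ENNReal.ofReal (brjunoTerm x k)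
      ≤ ENNReal.ofReal (√2 * (√2)⁻¹ ^ k) * ∫⁻ y, ENNReal.ofReal (-Real.log y) ∂gaussMeasure := by
  have hlog : Measurable fun y : ℝ => ENNReal.ofReal (-Real.log y) :=
    Real.measurable_log.neg.ennreal_ofReal
  have hlogk : Measurable fun x => ENNReal.ofReal (-Real.log (gaussIter x k)) :=
    hlog.comp (measurable_gaussIter k)
  calc ∫⁻ x in Ico 0 1, ENNReal.ofReal (brjunoTerm x k)
      ≤ ∫⁻ x in Ico 0 1, ENNReal.ofReal (√2 * (√2)⁻¹ ^ k) *
          ENNReal.ofReal (-Real.log (gaussIter x k)) := by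
        refine lintegral_mono_ae (ae_restrict_of_ae ?_)
        filter_upwards [ae_irrational] with x hx
        have hlog_nonneg : 0 ≤ -Real.log (gaussIter x k) :=
          have hg := gaussIter_mem_Ioo hx k
          neg_nonneg.2 (Real.log_nonpos hg.1.le hg.2.le)
        rw [← ENNReal.ofReal_mul (by positivity)]
        exact ENNReal.ofReal_le_ofReal ((brjunoTerm_le hx k).trans
          (mul_le_mul_of_nonneg_right (inv_qden_le hx k) hlog_nonneg))
    _ = ENNReal.ofReal (√2 * (√2)⁻¹ ^ k) *
          ∫⁻ y, ENNReal.ofReal (-Real.log y) ∂(volume.restrict (Ico 0 1)).map (gaussIter · k) := by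
        rw [lintegral_const_mul _ hlogk, lintegral_map hlog (measurable_gaussIter k)]
    _ ≤ _ := by gcongr; exact map_gaussIter_le k

lemma lintegral_brjuno_lt_top : ∫⁻ x in Ico 0 1, brjuno x < ⊤ := by
  have hgeom : Summable fun k : ℕ => √2 * (√2)⁻¹ ^ k :=
    (summable_geometric_of_lt_one (by positivity)
      (inv_lt_one_of_one_lt₀ Real.one_lt_sqrt_two)).mul_left _
  have hbrjuno : ∀ᵐ x ∂volume.restrict (Ico 0 1),
      brjuno x = ∑' k, ENNReal.ofReal (brjunoTerm x k) :=
    ae_restrict_of_ae (ae_irrational.mono fun x hx => if_pos hx)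
  rw [lintegral_congr_ae hbrjuno,
    lintegral_tsum fun k => (measurable_brjunoTerm k).ennreal_ofReal.aemeasurable]
  calc ∑' k, ∫⁻ x in Ico 0 1, ENNReal.ofReal (brjunoTerm x k)
      ≤ ∑' k : ℕ, ENNReal.ofReal (√2 * (√2)⁻¹ ^ k) *
          ∫⁻ y, ENNReal.ofReal (-Real.log y) ∂gaussMeasure :=
        ENNReal.tsum_le_tsum lintegral_brjunoTerm_le
    _ < ⊤ := by
      rw [ENNReal.tsum_mul_right, ← ENNReal.ofReal_tsum_of_nonneg (fun k => by positivity) hgeom]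
      exact ENNReal.mul_lt_top ENNReal.ofReal_lt_top lintegral_neg_log_gaussMeasure_lt_top

/-- the superlevel sets of the Brjuno function in `[0,1]` have small
Lebesgue measure for large `M`; in particular `B` is finite almost everywhere. -/
theorem statement10 :
    (∀ ε : ℝ, 0 < ε → ∃ M : ℝ, 0 < M ∧
      MeasureTheory.volume {x : ℝ | x ∈ Set.Icc (0 : ℝ) 1 ∧ ENNReal.ofReal M < brjuno x}
        < ENNReal.ofReal ε) ∧
    (∀ᵐ x : ℝ, brjuno x ≠ ⊤) := by
  have hfin : ∫⁻ x in Ico 0 1, brjuno x ≠ ⊤ := lintegral_brjuno_lt_top.ne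
  refine ⟨fun ε hε => ?_, ?_⟩
  · obtain ⟨M, hM, hlt⟩ := exists_pos_measure_lt_of_lintegral_ne_top
      measurable_brjuno.aemeasurable hfin (ENNReal.ofReal_pos.2 hε).ne'
    refine ⟨M, hM, ?_⟩
    rwa [Measure.restrict_congr_set Ico_ae_eq_Icc, Measure.restrict_apply' measurableSet_Icc,
      inter_comm] at hlt
  · refine ae_of_ae_restrict_Ico_of_periodic (fun x n => by rw [brjuno_add_intCast]) ?_
    exact (ae_lt_top measurable_brjuno hfin).mono fun _ h => h.ne
end
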